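/- The central set of the family of generalized exponential polynomials equals the common zero set of its first c_{p,q,m}+1 Maclaurin coefficients: {λ ∈ ℂ^N : f_λ(z) = 0 for all z ∈ ℂ} = {λ ∈ ℂ^N : a₀(λ) = a₁(λ) = ⋯ = a_{c_{p,q,m}}(λ) = 0}. -/

import Mathlib

/-!
Collect the terms with equal `Q_k`: this leaves `s ≤ m` nonzero `P_k` whose `Q_k`, all vanishing
at `0`, have pairwise distinct derivatives. Then `f^{(r)} = ∑_k A_{k,r} e^{Q_k}` with polynomials
`A_{k,r} = (d/dz + Q_k')^r P_k`, and the matrix `V = (A_{k,r})_{k, r < s}` has a nonzero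
determinant of degree at most `D = sp + s(s-1)(q-1)/2`: a polynomial relation among its columns
can be differentiated and one index eliminated, which by induction ends in a Wronskian identity
`W(c_0, c_1) = c_0 c_1 (Q_1' - Q_0')` that is impossible for degree reasons. In formal power
series, the row `(e^{Q_k})_k` times `V` is the row of Maclaurin series of `f, …, f^{(s-1)}`, all
divisible by `X^{D+1}` once `a_0, …, a_{c_{p,q,s}}` vanish; since the `e^{Q_k}` are units,
Cramer's rule gives `X^{D+1} ∣ det V`, forcing `s = 0`.
-/

/-- The index set for the parameter space `ℂ^N`, `N = m(p+q+1)`: a parameter is a string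
`((c_{ki})_{0≤i≤p},(d_{kj})_{1≤j≤q})_{1≤k≤m}`.  `Sum.inl (k,i)` indexes `c_{ki}` and
`Sum.inr (k,j)` indexes `d_{k(j+1)}`. -/
abbrev GEPIdx (p q m : ℕ) := (Fin m × Fin (p + 1)) ⊕ (Fin m × Fin q)

/-- The polynomial `P_k(z) = ∑_{i=0}^p c_{ki} z^i` determined by the parameter `l`. -/
noncomputable def gepP (p q m : ℕ) (l : GEPIdx p q m → ℂ) (k : Fin m) : Polynomial ℂ :=
  ∑ i : Fin (p + 1), Polynomial.C (l (Sum.inl (k, i))) * Polynomial.X ^ (i : ℕ)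

/-- The polynomial `Q_k(z) = ∑_{j=1}^q d_{kj} z^j` determined by the parameter `l`. -/
noncomputable def gepQ (p q m : ℕ) (l : GEPIdx p q m → ℂ) (k : Fin m) : Polynomial ℂ :=
  ∑ j : Fin q, Polynomial.C (l (Sum.inr (k, j))) * Polynomial.X ^ ((j : ℕ) + 1)

/-- The generalized exponential polynomial `f_λ(z) = ∑_{k=1}^m P_k(z) e^{Q_k(z)}`. -/
noncomputable def gep (p q m : ℕ) (l : GEPIdx p q m → ℂ) (z : ℂ) : ℂ :=
  ∑ k : Fin m, (gepP p q m l k).eval z * Complex.exp ((gepQ p q m l k).eval z)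

/-- The `n`-th Maclaurin coefficient `a_n(λ)` of `f_λ`. -/
noncomputable def gepCoeff (p q m : ℕ) (n : ℕ) (l : GEPIdx p q m → ℂ) : ℂ :=
  iteratedDeriv n (gep p q m l) 0 / n.factorial

/-- `c_{p,q,m} := m − 1 + mp + (1/2)m(m−1)(q−1)`. -/
def cpqm (p q m : ℕ) : ℕ := (m - 1) + m * p + m * (m - 1) * (q - 1) / 2

open Finset Polynomial Matrix Complex
open scoped ContDiff Nat

namespace Polynomial

variable {R : Type*} [CommRing R]

/-- The conjugate `e^{-Q} ∘ d/dz ∘ e^{Q}`, so that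
`(P e^Q)^{(r)} = ((twistedDerivative Q)^[r] P) e^Q`. -/
noncomputable def twistedDerivative (Q A : R[X]) : R[X] := derivative A + A * derivative Q

theorem natDegree_iterate_twistedDerivative_le {P Q : R[X]} {p q : ℕ} (hP : P.natDegree ≤ p)
    (hQ : Q.natDegree ≤ q) (r : ℕ) :
    ((twistedDerivative Q)^[r] P).natDegree ≤ p + r * (q - 1) := by
  induction r with
  | zero => simpa
  | succ r ih =>
    rw [Function.iterate_succ_apply', twistedDerivative]
    have hQ' : (derivative Q).natDegree ≤ q - 1 :=
      (natDegree_derivative_le Q).trans (Nat.sub_le_sub_right hQ 1)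
    refine (natDegree_add_le _ _).trans (max_le ?_ ?_)
    · exact (natDegree_derivative_le _).trans (by rw [add_one_mul]; omega)
    · exact natDegree_mul_le.trans (by rw [add_one_mul]; omega)

theorem wronskian_ne_mul_mul [IsDomain R] {a b w : R[X]} (ha : a ≠ 0) (hb : b ≠ 0) (hw : w ≠ 0) :
    wronskian a b ≠ a * b * w := by
  intro h
  have hlt := degree_wronskian_lt_add ha hb
  rw [h, degree_mul, degree_mul, degree_eq_natDegree ha, degree_eq_natDegree hb,
    degree_eq_natDegree hw] at hlt
  norm_cast at hlt
  omega

theorem sum_mul_iterate_twistedDerivative_succ {ι : Type*} (s : Finset ι) (P Q c : ι → R[X])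
    (r : ℕ) :
    ∑ k ∈ s, (derivative (c k) - c k * derivative (Q k)) * (twistedDerivative (Q k))^[r] (P k) =
      derivative (∑ k ∈ s, c k * (twistedDerivative (Q k))^[r] (P k)) -
        ∑ k ∈ s, c k * (twistedDerivative (Q k))^[r + 1] (P k) := by
  rw [derivative_sum, ← sum_sub_distrib]
  refine sum_congr rfl fun k _ => ?_
  rw [Function.iterate_succ_apply', twistedDerivative, derivative_mul]
  ring

/-- Differentiating the relation `c` and eliminating the index `k₀` (whose entry becomes `0`)
gives a shorter relation. -/
theorem sum_mul_iterate_twistedDerivative_eliminate {ι : Type*} {s : Finset ι} {P Q c : ι → R[X]}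
    {n : ℕ} (hc : ∀ r ≤ n, ∑ k ∈ s, c k * (twistedDerivative (Q k))^[r] (P k) = 0) (k₀ : ι) :
    ∀ r < n, ∑ k ∈ s, (c k₀ * (derivative (c k) - c k * derivative (Q k)) -
      (derivative (c k₀) - c k₀ * derivative (Q k₀)) * c k) *
        (twistedDerivative (Q k))^[r] (P k) = 0 := by
  intro r hr
  have hd := sum_mul_iterate_twistedDerivative_succ s P Q c r
  rw [hc r hr.le, hc (r + 1) hr, derivative_zero, sub_zero] at hd
  calc _ = c k₀ * ∑ k ∈ s, (derivative (c k) - c k * derivative (Q k)) *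
          (twistedDerivative (Q k))^[r] (P k) -
        (derivative (c k₀) - c k₀ * derivative (Q k₀)) *
          ∑ k ∈ s, c k * (twistedDerivative (Q k))^[r] (P k) := by
        rw [mul_sum, mul_sum, ← sum_sub_distrib]
        exact sum_congr rfl fun k _ => by ring
    _ = 0 := by rw [hd, hc r hr.le, mul_zero, mul_zero, sub_zero]

theorem eq_zero_of_sum_mul_iterate_twistedDerivative_eq_zero [IsDomain R] {ι : Type*}
    {P Q : ι → R[X]} (hP : ∀ k, P k ≠ 0) (hQ : Function.Injective fun k => derivative (Q k))
    {s : Finset ι} {c : ι → R[X]}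
    (hc : ∀ r < #s, ∑ k ∈ s, c k * (twistedDerivative (Q k))^[r] (P k) = 0) :
    ∀ k ∈ s, c k = 0 := by
  classical
  induction hn : #s generalizing s c with
  | zero => simp_all
  | succ n ih =>
  have of_eq_zero : ∀ e : ι → R[X],
      (∀ r < n, ∑ k ∈ s, e k * (twistedDerivative (Q k))^[r] (P k) = 0) →
      ∀ k₀ ∈ s, e k₀ = 0 → ∀ k ∈ s, e k = 0 := by
    intro e he k₀ hk₀ hek₀ k hk
    have hcard : #(s.erase k₀) = n := by rw [card_erase_of_mem hk₀, hn]; rfl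
    have hrest := ih (s := s.erase k₀) (c := e)
      (fun r hr => by rw [sum_erase _ (by rw [hek₀, zero_mul])]; exact he r (by omega)) hcard
    obtain rfl | hne := eq_or_ne k k₀
    · exact hek₀
    · exact hrest k (mem_erase.2 ⟨hne, hk⟩)
  by_cases hzero : ∃ k₀ ∈ s, c k₀ = 0
  · obtain ⟨k₀, hk₀, hck₀⟩ := hzero
    exact of_eq_zero c (fun r hr => hc r (by omega)) k₀ hk₀ hck₀
  push Not at hzero
  exfalso
  obtain ⟨k₀, hk₀⟩ : s.Nonempty := card_pos.1 (by omega)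
  rcases n.eq_zero_or_pos with rfl | hpos
  · obtain ⟨k, rfl⟩ := card_eq_one.1 hn
    have h0 := hc 0 (by simp)
    rw [sum_singleton, Function.iterate_zero_apply] at h0
    exact mul_ne_zero (hzero k (mem_singleton_self k)) (hP k) h0
  obtain ⟨k₁, hk₁, hk₁₀⟩ := exists_mem_ne (by omega : 1 < #s) k₀
  have he := of_eq_zero _ (sum_mul_iterate_twistedDerivative_eliminate
    (fun r hr => hc r (by omega)) k₀) k₀ hk₀ (by ring) k₁ hk₁
  refine wronskian_ne_mul_mul (hzero k₀ hk₀) (hzero k₁ hk₁) (sub_ne_zero.2 (hQ.ne hk₁₀)) ?_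
  rw [wronskian]
  linear_combination he

theorem eq_of_derivative_eq [IsDomain R] [CharZero R] {a b : R[X]} (h0 : a.coeff 0 = b.coeff 0)
    (h : derivative a = derivative b) : a = b := by
  rw [← sub_eq_zero, eq_C_of_derivative_eq_zero (p := a - b) (by rw [derivative_sub, h, sub_self]),
    coeff_sub, h0, sub_self, map_zero]

theorem natDegree_det_le_sum {ι : Type*} [Fintype ι] [DecidableEq ι] (M : Matrix ι ι R[X])
    (d : ι → ℕ) (hM : ∀ i j, (M i j).natDegree ≤ d j) : M.det.natDegree ≤ ∑ j, d j := by
  rw [Matrix.det_apply']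
  refine natDegree_sum_le_of_forall_le _ _ fun σ _ => natDegree_mul_le.trans ?_
  rw [natDegree_intCast, zero_add]
  exact (natDegree_prod_le _ _).trans (sum_le_sum fun j _ => hM _ _)

theorem eq_zero_of_X_pow_dvd_coe {P : R[X]} {n : ℕ} (hP : P.natDegree < n)
    (hdvd : (PowerSeries.X : PowerSeries R) ^ n ∣ P) : P = 0 := by
  ext i
  rcases lt_or_ge i n with hi | hi
  · simpa using PowerSeries.X_pow_dvd_iff.1 hdvd i hi
  · exact coeff_eq_zero_of_natDegree_lt (hP.trans_le hi)

section expPolyMatrix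

variable {ι : Type*} [Fintype ι]

/-- Row `k` holds `e^{-Q_k} (P_k e^{Q_k})^{(r)}` for `r < card ι`; columns are numbered
through `Fintype.equivFin`. -/
noncomputable def expPolyMatrix (P Q : ι → R[X]) : Matrix ι ι R[X] :=
  Matrix.of fun k j => (twistedDerivative (Q k))^[Fintype.equivFin ι j] (P k)

theorem det_expPolyMatrix_ne_zero [IsDomain R] [DecidableEq ι] {P Q : ι → R[X]}
    (hP : ∀ k, P k ≠ 0) (hQ : Function.Injective fun k => derivative (Q k)) :
    (expPolyMatrix P Q).det ≠ 0 := by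
  intro hdet
  obtain ⟨c, hc0, hc⟩ := Matrix.exists_vecMul_eq_zero_iff.2 hdet
  refine hc0 (_root_.funext fun k => eq_zero_of_sum_mul_iterate_twistedDerivative_eq_zero hP hQ
    (fun r hr => ?_) k (mem_univ k))
  have := congrFun hc ((Fintype.equivFin ι).symm ⟨r, by simpa using hr⟩)
  simpa [Matrix.vecMul, dotProduct, expPolyMatrix] using this

theorem natDegree_det_expPolyMatrix_le [DecidableEq ι] {P Q : ι → R[X]} {p q : ℕ}
    (hP : ∀ k, (P k).natDegree ≤ p) (hQ : ∀ k, (Q k).natDegree ≤ q) :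
    (expPolyMatrix P Q).det.natDegree ≤
      Fintype.card ι * p + Fintype.card ι * (Fintype.card ι - 1) * (q - 1) / 2 := by
  refine (natDegree_det_le_sum _ (fun j => p + Fintype.equivFin ι j * (q - 1))
    fun k j => natDegree_iterate_twistedDerivative_le (hP k) (hQ k) _).trans ?_
  rw [sum_add_distrib, ← sum_mul, Equiv.sum_comp (Fintype.equivFin ι) (fun r => (r : ℕ)),
    Fin.sum_univ_eq_sum_range (fun r => r), sum_range_id]
  simp only [sum_const, card_univ, smul_eq_mul]
  rw [mul_comm _ (q - 1), mul_comm _ (q - 1)]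
  exact Nat.add_le_add_left (Nat.mul_div_le_mul_div_assoc _ _ _) _

end expPolyMatrix

end Polynomial

namespace Matrix

theorem dvd_det_of_dvd_vecMul {ι A : Type*} [Fintype ι] [DecidableEq ι] [CommRing A]
    {M : Matrix ι ι A} {v : ι → A} {a : A} {k : ι} (hv : IsUnit (v k))
    (hdvd : ∀ j, a ∣ (v ᵥ* M) j) : a ∣ M.det := by
  have hadj : (v ᵥ* M ᵥ* M.adjugate) k = M.det * v k := by
    rw [vecMul_vecMul, mul_adjugate, vecMul_smul, vecMul_one,
      Pi.smul_apply, smul_eq_mul]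
  rw [← hv.dvd_mul_right, ← hadj]
  exact dvd_sum fun j _ => (hdvd j).mul_right _

end Matrix

namespace Polynomial

variable {𝕜 : Type*} [NontriviallyNormedField 𝕜]

theorem iteratedDeriv_eval (P : 𝕜[X]) (n : ℕ) :
    iteratedDeriv n (fun z => P.eval z) = fun z => (derivative^[n] P).eval z := by
  induction n generalizing P with
  | zero => simp
  | succ n ih =>
    have hderiv : (deriv fun z => P.eval z) = fun z => (derivative P).eval z :=
      _root_.funext fun z => Polynomial.deriv P
    rw [iteratedDeriv_succ', hderiv, ih, Function.iterate_succ_apply]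

theorem contDiff_eval (P : 𝕜[X]) (n : WithTop ℕ∞) : ContDiff 𝕜 n fun z => P.eval z := by
  simpa using P.contDiff_aeval (𝕜 := 𝕜) n

end Polynomial

section maclaurinSeries

variable {𝕜 : Type*} [NontriviallyNormedField 𝕜]

noncomputable def maclaurinSeries (f : 𝕜 → 𝕜) : PowerSeries 𝕜 :=
  PowerSeries.mk fun n => iteratedDeriv n f 0 / n !

@[simp]
theorem coeff_maclaurinSeries (f : 𝕜 → 𝕜) (n : ℕ) :
    PowerSeries.coeff n (maclaurinSeries f) = iteratedDeriv n f 0 / n ! :=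
  PowerSeries.coeff_mk _ _

theorem isUnit_maclaurinSeries_iff {f : 𝕜 → 𝕜} : IsUnit (maclaurinSeries f) ↔ f 0 ≠ 0 := by
  rw [PowerSeries.isUnit_iff_constantCoeff, ← PowerSeries.coeff_zero_eq_constantCoeff_apply,
    coeff_maclaurinSeries, isUnit_iff_ne_zero]
  simp

theorem X_pow_dvd_maclaurinSeries_iteratedDeriv {f : 𝕜 → 𝕜} {n r : ℕ}
    (hf : ∀ i < n, iteratedDeriv (i + r) f 0 = 0) :
    PowerSeries.X ^ n ∣ maclaurinSeries (iteratedDeriv r f) := by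
  refine PowerSeries.X_pow_dvd_iff.2 fun i hi => ?_
  rw [coeff_maclaurinSeries, iteratedDeriv_eq_iterate, iteratedDeriv_eq_iterate,
    ← Function.iterate_add_apply, ← iteratedDeriv_eq_iterate, hf i hi, zero_div]

theorem maclaurinSeries_sum {ι : Type*} (s : Finset ι) {f : ι → 𝕜 → 𝕜}
    (hf : ∀ i ∈ s, ContDiff 𝕜 ∞ (f i)) :
    maclaurinSeries (fun z => ∑ i ∈ s, f i z) = ∑ i ∈ s, maclaurinSeries (f i) := by
  ext n
  simp only [coeff_maclaurinSeries, map_sum, ← sum_div]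
  rw [iteratedDeriv_fun_sum fun i hi => ((hf i hi).of_le (by exact_mod_cast le_top)).contDiffAt]

variable [CharZero 𝕜]

theorem maclaurinSeries_mul {f g : 𝕜 → 𝕜} (hf : ContDiff 𝕜 ∞ f) (hg : ContDiff 𝕜 ∞ g) :
    maclaurinSeries (fun z => f z * g z) = maclaurinSeries f * maclaurinSeries g := by
  ext n
  rw [coeff_maclaurinSeries, PowerSeries.coeff_mul, Nat.sum_antidiagonal_eq_sum_range_succ_mk,
    iteratedDeriv_fun_mul (hf.of_le (by exact_mod_cast le_top)).contDiffAt
      (hg.of_le (by exact_mod_cast le_top)).contDiffAt, sum_div]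
  refine sum_congr rfl fun i hi => ?_
  rw [coeff_maclaurinSeries, coeff_maclaurinSeries,
    Nat.cast_choose 𝕜 (Nat.lt_succ_iff.1 (mem_range.1 hi))]
  have : (n ! : 𝕜) ≠ 0 := Nat.cast_ne_zero.2 n.factorial_ne_zero
  field_simp

theorem maclaurinSeries_eval (P : 𝕜[X]) : maclaurinSeries (fun z => P.eval z) = P := by
  ext n
  rw [coeff_maclaurinSeries, coeff_coe, iteratedDeriv_eval]
  beta_reduce
  rw [← coeff_zero_eq_eval_zero, coeff_iterate_derivative, zero_add, Nat.descFactorial_self,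
    nsmul_eq_mul]
  exact mul_div_cancel_left₀ _ (Nat.cast_ne_zero.2 n.factorial_ne_zero)

end maclaurinSeries

theorem hasDerivAt_eval_mul_cexp (A Q : ℂ[X]) (z : ℂ) :
    HasDerivAt (fun z => A.eval z * exp (Q.eval z))
      ((twistedDerivative Q A).eval z * exp (Q.eval z)) z := by
  refine ((A.hasDerivAt z).fun_mul (Q.hasDerivAt z).cexp).congr_deriv ?_
  simp only [twistedDerivative, eval_add, eval_mul]
  ring

theorem iteratedDeriv_eval_mul_cexp (P Q : ℂ[X]) (n : ℕ) :
    iteratedDeriv n (fun z => P.eval z * exp (Q.eval z)) =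
      fun z => ((twistedDerivative Q)^[n] P).eval z * exp (Q.eval z) := by
  induction n generalizing P with
  | zero => simp
  | succ n ih =>
    rw [iteratedDeriv_succ', funext fun z => (hasDerivAt_eval_mul_cexp P Q z).deriv, ih,
      Function.iterate_succ_apply]

theorem maclaurinSeries_iteratedDeriv_sum_eval_mul_cexp {ι : Type*} [Fintype ι]
    (P Q : ι → ℂ[X]) (r : ℕ) :
    maclaurinSeries (iteratedDeriv r fun z => ∑ k, (P k).eval z * exp ((Q k).eval z)) =
      ∑ k, maclaurinSeries (fun z => exp ((Q k).eval z)) *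
        ((twistedDerivative (Q k))^[r] (P k) : PowerSeries ℂ) := by
  have hsmooth (A Q : ℂ[X]) : ContDiff ℂ ∞ fun z => A.eval z * exp (Q.eval z) :=
    (A.contDiff_eval _).mul (Q.contDiff_eval _).cexp
  have hderiv : (iteratedDeriv r fun z => ∑ k, (P k).eval z * exp ((Q k).eval z)) =
      fun z => ∑ k, ((twistedDerivative (Q k))^[r] (P k)).eval z * exp ((Q k).eval z) := by
    funext z
    rw [iteratedDeriv_fun_sum fun k _ =>
      ((hsmooth _ _).of_le (by exact_mod_cast le_top)).contDiffAt]
    simp only [iteratedDeriv_eval_mul_cexp]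
  rw [hderiv, maclaurinSeries_sum _ fun k _ => hsmooth _ _]
  refine sum_congr rfl fun k _ => ?_
  rw [maclaurinSeries_mul (contDiff_eval _ _) ((Q k).contDiff_eval _).cexp,
    maclaurinSeries_eval, mul_comm]

theorem isEmpty_of_iteratedDeriv_sum_eval_mul_cexp_eq_zero {ι : Type*} [Fintype ι] {p q : ℕ}
    {P Q : ι → ℂ[X]} (hP : ∀ k, P k ≠ 0) (hPdeg : ∀ k, (P k).natDegree ≤ p)
    (hQdeg : ∀ k, (Q k).natDegree ≤ q) (hQ : Function.Injective fun k => derivative (Q k))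
    (hvanish : ∀ n ≤ cpqm p q (Fintype.card ι),
      iteratedDeriv n (fun z => ∑ k, (P k).eval z * exp ((Q k).eval z)) 0 = 0) :
    IsEmpty ι := by
  classical
  refine ⟨fun k₀ => ?_⟩
  set n := Fintype.card ι
  set D := n * p + n * (n - 1) * (q - 1) / 2
  set ψ : ℂ[X] →+* PowerSeries ℂ := coeToPowerSeries.ringHom
  set τ := fun k => maclaurinSeries fun z => exp ((Q k).eval z)
  have hcpqm : cpqm p q n = n - 1 + D := Nat.add_assoc _ _ _
  have hrow : ∀ j, PowerSeries.X ^ (D + 1) ∣ (τ ᵥ* ψ.mapMatrix (expPolyMatrix P Q)) j := by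
    intro j
    have hj := (Fintype.equivFin ι j).isLt
    convert X_pow_dvd_maclaurinSeries_iteratedDeriv fun i (hi : i < D + 1) =>
      hvanish (i + Fintype.equivFin ι j) (by omega)
    rw [maclaurinSeries_iteratedDeriv_sum_eval_mul_cexp]
    rfl
  have hdvd := Matrix.dvd_det_of_dvd_vecMul (k := k₀)
    (isUnit_maclaurinSeries_iff.2 (exp_ne_zero ((Q k₀).eval 0))) hrow
  rw [← RingHom.map_det] at hdvd
  exact det_expPolyMatrix_ne_zero hP hQ (eq_zero_of_X_pow_dvd_coe
    (Nat.lt_succ_of_le (natDegree_det_expPolyMatrix_le hPdeg hQdeg)) hdvd)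

section gep

theorem sum_eval_mul_cexp_eq_sum_filter_image {ι : Type*} (s : Finset ι) (P Q : ι → ℂ[X])
    (z : ℂ) :
    ∑ k ∈ s, (P k).eval z * exp ((Q k).eval z) =
      ∑ u ∈ (s.image Q).filter (fun u => ∑ k ∈ s with Q k = u, P k ≠ 0),
        (∑ k ∈ s with Q k = u, P k).eval z * exp (u.eval z) := by
  rw [sum_filter_of_ne (p := fun u => ∑ k ∈ s with Q k = u, P k ≠ 0)
      fun u _ hu h0 => hu (by rw [h0, eval_zero, zero_mul]),
    ← sum_fiberwise_of_maps_to fun k hk => mem_image_of_mem Q hk]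
  refine sum_congr rfl fun u _ => ?_
  rw [eval_finsetSum, sum_mul]
  exact sum_congr rfl fun k hk => by rw [(mem_filter.1 hk).2]

variable {p q m : ℕ}

theorem natDegree_gepP_le (l : GEPIdx p q m → ℂ) (k : Fin m) : (gepP p q m l k).natDegree ≤ p :=
  natDegree_sum_le_of_forall_le _ _ fun i _ =>
    (natDegree_C_mul_X_pow_le _ _).trans (Nat.lt_succ_iff.1 i.isLt)

theorem natDegree_gepQ_le (l : GEPIdx p q m → ℂ) (k : Fin m) : (gepQ p q m l k).natDegree ≤ q :=
  natDegree_sum_le_of_forall_le _ _ fun j _ => (natDegree_C_mul_X_pow_le _ _).trans j.isLt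

theorem coeff_gepQ_zero (l : GEPIdx p q m → ℂ) (k : Fin m) : (gepQ p q m l k).coeff 0 = 0 := by
  simp [gepQ, coeff_X_pow]

theorem cpqm_mono : Monotone (cpqm p q) := fun a b hab => by
  unfold cpqm
  gcongr

end gep

theorem centralSet_gep_eq_common_zeros_general (p q m : ℕ) :
    {l : GEPIdx p q m → ℂ | ∀ z : ℂ, gep p q m l z = 0}
      = {l : GEPIdx p q m → ℂ | ∀ n ≤ cpqm p q m, gepCoeff p q m n l = 0} := by
  classical
  ext l
  refine ⟨fun h n _ => by simp [gepCoeff, funext h], fun h z => ?_⟩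
  set R : ℂ[X] → ℂ[X] := fun u => ∑ k with gepQ p q m l k = u, gepP p q m l k
  set S := (univ.image (gepQ p q m l)).filter (R · ≠ 0)
  have hgep : gep p q m l = fun z => ∑ u : S, (R u).eval z * exp ((u : ℂ[X]).eval z) :=
    funext fun z => (sum_eval_mul_cexp_eq_sum_filter_image _ _ _ z).trans (sum_coe_sort S _).symm
  have hSQ (u : S) : ∃ k, gepQ p q m l k = u := by simpa using (mem_filter.1 u.2).1
  have hcard : Fintype.card S ≤ m := by
    simpa using (card_filter_le _ _).trans (card_image_le (s := (univ : Finset (Fin m))))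
  have : IsEmpty S := isEmpty_of_iteratedDeriv_sum_eval_mul_cexp_eq_zero (p := p) (q := q)
    (fun u => (mem_filter.1 u.2).2)
    (fun u => natDegree_sum_le_of_forall_le _ _ fun k _ => natDegree_gepP_le l k)
    (fun u => by obtain ⟨k, hk⟩ := hSQ u; exact hk ▸ natDegree_gepQ_le l k)
    (fun u v huv => by
      obtain ⟨k, hk⟩ := hSQ u
      obtain ⟨k', hk'⟩ := hSQ v
      refine Subtype.ext (eq_of_derivative_eq ?_ huv)
      rw [← hk, ← hk', coeff_gepQ_zero, coeff_gepQ_zero])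
    (fun n hn => by
      rw [← hgep]
      simpa [gepCoeff, Nat.factorial_ne_zero] using h n (hn.trans (cpqm_mono hcard)))
  rw [hgep]
  simp

/-- The central set of the family of generalized exponential polynomials equals the common
zero set of its first `c_{p,q,m}+1` Maclaurin coefficients:
`{λ : f_λ ≡ 0} = {λ : a₀(λ) = ⋯ = a_{c_{p,q,m}}(λ) = 0}`. -/
theorem centralSet_gep_eq_common_zeros (p q m : ℕ) (hq : 1 ≤ q) (hm : 1 ≤ m) :
    {l : GEPIdx p q m → ℂ | ∀ z : ℂ, gep p q m l z = 0}
      = {l : GEPIdx p q m → ℂ | ∀ n ≤ cpqm p q m, gepCoeff p q m n l = 0} :=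
  centralSet_gep_eq_common_zeros_general p q m
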